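/- Let ρ = Σ_{i=0}^3 λᵢ |Ψᵢ⟩⟨Ψᵢ| be a Bell diagonal state on ℂ² ⊗ ℂ², with λᵢ ≥ 0 and Σᵢ λᵢ = 1. Then τ(𝔄(ρ)) = (1/2)·(1 + |λ₀+λ₃−λ₁−λ₂| + |λ₁−λ₂| + |λ₀−λ₃| + ||λ₀−λ₃| − |λ₁−λ₂||). Moreover τ(𝔄(ρ)) ≤ 1 if and only if maxᵢ λᵢ ≤ 1/2. -/

import Mathlib

open scoped Matrix Kronecker BigOperators ComplexOrder
open MeasureTheory

/-- Trace norm of a complex square matrix: `tr √(AᴴA)` (the sum of singular values). -/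
noncomputable def traceNorm {n : Type*} [Fintype n] [DecidableEq n] (A : Matrix n n ℂ) : ℝ :=
  (((Matrix.posSemidef_conjTranspose_mul_self A).1.eigenvectorUnitary.1 *
    Matrix.diagonal (((↑) : ℝ → ℂ) ∘ (√·) ∘ (Matrix.posSemidef_conjTranspose_mul_self A).1.eigenvalues) *
    (star (Matrix.posSemidef_conjTranspose_mul_self A).1.eigenvectorUnitary : Matrix n n ℂ)).trace).re

/-- The greatest cross norm `‖·‖_γ` of an operator on `ℂ^{d₁} ⊗ ℂ^{d₂}`: the infimum of
`Σᵢ ‖uᵢ‖₁ ‖vᵢ‖₁` over all finite decompositions `T = Σᵢ uᵢ ⊗ vᵢ` into Kronecker products. -/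
noncomputable def gcn {d₁ d₂ : ℕ} (T : Matrix (Fin d₁ × Fin d₂) (Fin d₁ × Fin d₂) ℂ) : ℝ :=
  sInf { r : ℝ | ∃ (n : ℕ) (u : Fin n → Matrix (Fin d₁) (Fin d₁) ℂ)
      (v : Fin n → Matrix (Fin d₂) (Fin d₂) ℂ),
      T = ∑ i, u i ⊗ₖ v i ∧ r = ∑ i, traceNorm (u i) * traceNorm (v i) }

/-- A density matrix: positive semidefinite with trace one. -/
def IsDensityMatrix {n : Type*} [Fintype n] (ρ : Matrix n n ℂ) : Prop :=
  ρ.PosSemidef ∧ ρ.trace = 1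

/-- Separability of a state on `ℂ^{d₁} ⊗ ℂ^{d₂}`: a finite convex-type combination
`ρ = Σᵢ ωᵢ ρᵢ⁽¹⁾ ⊗ ρᵢ⁽²⁾` of Kronecker products of density matrices, with `ωᵢ ≥ 0`. -/
def IsSeparable' {d₁ d₂ : ℕ} (ρ : Matrix (Fin d₁ × Fin d₂) (Fin d₁ × Fin d₂) ℂ) : Prop :=
  ∃ (n : ℕ) (ω : Fin n → ℝ) (ρ₁ : Fin n → Matrix (Fin d₁) (Fin d₁) ℂ)
    (ρ₂ : Fin n → Matrix (Fin d₂) (Fin d₂) ℂ),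
    (∀ i, 0 ≤ ω i) ∧ (∀ i, IsDensityMatrix (ρ₁ i)) ∧ (∀ i, IsDensityMatrix (ρ₂ i)) ∧
    ρ = ∑ i, (ω i : ℂ) • (ρ₁ i ⊗ₖ ρ₂ i)

/-- The realignment map `𝔄`: `𝔄(ρ)_{(i,j),(k,l)} = ρ_{(i,k),(j,l)}`. -/
def realign {d : ℕ} (ρ : Matrix (Fin d × Fin d) (Fin d × Fin d) ℂ) :
    Matrix (Fin d × Fin d) (Fin d × Fin d) ℂ :=
  Matrix.of fun p q => ρ (p.1, q.1) (p.2, q.2)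

/-- `τ(𝔄(ρ))`: the trace norm of the realignment of `ρ`. -/
noncomputable def tauRealign {d : ℕ} (ρ : Matrix (Fin d × Fin d) (Fin d × Fin d) ℂ) : ℝ :=
  traceNorm (realign ρ)

/-- The flip operator `𝔽 = Σ_{i,j} |i⊗j⟩⟨j⊗i|` on `ℂ^d ⊗ ℂ^d`. -/
def flipOp (d : ℕ) : Matrix (Fin d × Fin d) (Fin d × Fin d) ℂ :=
  Matrix.of fun p q => if p.1 = q.2 ∧ p.2 = q.1 then 1 else 0

/-- The Werner state `ρ_f = (1/(d³−d))((d−f) I + (df−1) 𝔽)` on `ℂ^d ⊗ ℂ^d`. -/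
noncomputable def wernerState (d : ℕ) (f : ℝ) : Matrix (Fin d × Fin d) (Fin d × Fin d) ℂ :=
  (((d : ℂ) ^ 3 - d)⁻¹) • (((d : ℂ) - (f : ℂ)) • (1 : Matrix (Fin d × Fin d) (Fin d × Fin d) ℂ)
    + ((d : ℂ) * (f : ℂ) - 1) • flipOp d)

/-- The maximally entangled vector `|Ψ⁺⟩ = (1/√d) Σᵢ |i⊗i⟩` on `ℂ^d ⊗ ℂ^d`. -/
noncomputable def psiPlus (d : ℕ) : Fin d × Fin d → ℂ :=
  fun p => if p.1 = p.2 then ((1 / Real.sqrt d : ℝ) : ℂ) else 0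

/-- The isotropic state `ρ_F = ((1−F)/(d²−1))(I − |Ψ⁺⟩⟨Ψ⁺|) + F |Ψ⁺⟩⟨Ψ⁺|` on `ℂ^d ⊗ ℂ^d`. -/
noncomputable def isotropicState (d : ℕ) (F : ℝ) : Matrix (Fin d × Fin d) (Fin d × Fin d) ℂ :=
  (((1 - F : ℝ) : ℂ) / ((d : ℂ) ^ 2 - 1)) •
      ((1 : Matrix (Fin d × Fin d) (Fin d × Fin d) ℂ)
        - Matrix.vecMulVec (psiPlus d) (star (psiPlus d)))
    + ((F : ℝ) : ℂ) • Matrix.vecMulVec (psiPlus d) (star (psiPlus d))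

/-- The Bell basis of `ℂ² ⊗ ℂ²`. -/
noncomputable def bellVec : Fin 4 → (Fin 2 × Fin 2 → ℂ)
  | 0 => fun p => ((if p = (0, 0) then 1 else 0) + (if p = (1, 1) then 1 else 0))
      / ((Real.sqrt 2 : ℝ) : ℂ)
  | 1 => fun p => Complex.I * ((if p = (0, 1) then 1 else 0) + (if p = (1, 0) then 1 else 0))
      / ((Real.sqrt 2 : ℝ) : ℂ)
  | 2 => fun p => ((if p = (1, 0) then 1 else 0) - (if p = (0, 1) then 1 else 0))
      / ((Real.sqrt 2 : ℝ) : ℂ)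
  | 3 => fun p => Complex.I * ((if p = (0, 0) then 1 else 0) - (if p = (1, 1) then 1 else 0))
      / ((Real.sqrt 2 : ℝ) : ℂ)

/-- The Bell diagonal state `ρ = Σᵢ λᵢ |Ψᵢ⟩⟨Ψᵢ|` on `ℂ² ⊗ ℂ²`. -/
noncomputable def bellDiagonal (lam : Fin 4 → ℝ) :
    Matrix (Fin 2 × Fin 2) (Fin 2 × Fin 2) ℂ :=
  ∑ i, ((lam i : ℝ) : ℂ) • Matrix.vecMulVec (bellVec i) (star (bellVec i))

/-! ### Auxiliary machinery for the proof -/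

/-- The common symmetric 4×4 pattern. -/
def entAux (a b c d : ℝ) (p q : Fin 2 × Fin 2) : ℝ :=
  (if p = (0,0) ∧ q = (0,0) then a else 0) + (if p = (0,0) ∧ q = (1,1) then b else 0)
  + (if p = (0,1) ∧ q = (0,1) then c else 0) + (if p = (0,1) ∧ q = (1,0) then d else 0)
  + (if p = (1,0) ∧ q = (0,1) then d else 0) + (if p = (1,0) ∧ q = (1,0) then c else 0)
  + (if p = (1,1) ∧ q = (0,0) then b else 0) + (if p = (1,1) ∧ q = (1,1) then a else 0)

noncomputable def cMAux (a b c d : ℝ) : Matrix (Fin 2 × Fin 2) (Fin 2 × Fin 2) ℂ :=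
  Matrix.of fun p q => ((entAux a b c d p q : ℝ) : ℂ)

lemma cMAux_conjTranspose (a b c d : ℝ) : (cMAux a b c d)ᴴ = cMAux a b c d := by
  ext p q
  fin_cases p <;> fin_cases q <;>
    simp [cMAux, entAux, Matrix.conjTranspose_apply, Prod.ext_iff]

lemma cMAux_mul (a b c d a' b' c' d' : ℝ) :
    cMAux a b c d * cMAux a' b' c' d' =
      cMAux (a*a'+b*b') (a*b'+b*a') (c*c'+d*d') (c*d'+d*c') := by
  ext p q
  fin_cases p <;> fin_cases q <;>
    simp [cMAux, entAux, Matrix.mul_apply, Fintype.sum_prod_type, Fin.sum_univ_two,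
      Prod.ext_iff] <;>
    ring

lemma cMAux_trace (a b c d : ℝ) : (cMAux a b c d).trace = ((2*a + 2*c : ℝ) : ℂ) := by
  simp [cMAux, entAux, Matrix.trace, Matrix.diag, Fintype.sum_prod_type, Fin.sum_univ_two,
    Prod.ext_iff]
  push_cast; ring

lemma cMAux_smul (r a b c d : ℝ) :
    ((r : ℝ) : ℂ) • cMAux a b c d = cMAux (r*a) (r*b) (r*c) (r*d) := by
  ext p q
  fin_cases p <;> fin_cases q <;>
    simp [cMAux, entAux, Prod.ext_iff] <;> push_cast <;> ring

lemma cMAux_add (a b c d a' b' c' d' : ℝ) :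
    cMAux a b c d + cMAux a' b' c' d' = cMAux (a+a') (b+b') (c+c') (d+d') := by
  ext p q
  fin_cases p <;> fin_cases q <;>
    simp [cMAux, entAux, Prod.ext_iff] <;> push_cast <;> ring

noncomputable def bAux (x y z w : ℝ) : Matrix (Fin 2 × Fin 2) (Fin 2 × Fin 2) ℂ :=
  Matrix.of fun r c => ((
    (if r = (0,0) ∧ c = (0,0) then Real.sqrt x else 0)
    + (if r = (0,0) ∧ c = (1,1) then Real.sqrt x else 0)
    + (if r = (1,1) ∧ c = (0,0) then Real.sqrt y else 0)
    - (if r = (1,1) ∧ c = (1,1) then Real.sqrt y else 0)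
    + (if r = (0,1) ∧ c = (0,1) then Real.sqrt z else 0)
    + (if r = (0,1) ∧ c = (1,0) then Real.sqrt z else 0)
    + (if r = (1,0) ∧ c = (0,1) then Real.sqrt w else 0)
    - (if r = (1,0) ∧ c = (1,0) then Real.sqrt w else 0) : ℝ) : ℂ)

lemma cMAux_posSemidef (x y z w : ℝ) (hx : 0 ≤ x) (hy : 0 ≤ y) (hz : 0 ≤ z) (hw : 0 ≤ w) :
    (cMAux (x+y) (x-y) (z+w) (z-w)).PosSemidef := by
  have h : cMAux (x+y) (x-y) (z+w) (z-w) = (bAux x y z w)ᴴ * (bAux x y z w) := by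
    ext p q
    fin_cases p <;> fin_cases q <;>
      simp [cMAux, entAux, bAux, Matrix.mul_apply, Matrix.conjTranspose_apply,
        Fintype.sum_prod_type, Fin.sum_univ_two, Prod.ext_iff] <;>
      push_cast <;> ring_nf <;>
      simp [← Complex.ofReal_pow, Real.sq_sqrt hx, Real.sq_sqrt hy, Real.sq_sqrt hz,
        Real.sq_sqrt hw]
  rw [h]
  exact Matrix.posSemidef_conjTranspose_mul_self _

lemma htwoAux : (((Real.sqrt 2 : ℝ) : ℂ)) * (((Real.sqrt 2 : ℝ) : ℂ)) = 2 := by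
  rw [← Complex.ofReal_mul, Real.mul_self_sqrt (by norm_num)]; norm_num

lemma bell0Aux : Matrix.vecMulVec (bellVec 0) (star (bellVec 0)) = cMAux (1/2) (1/2) 0 0 := by
  ext p q
  fin_cases p <;> fin_cases q <;>
    simp [bellVec, cMAux, entAux, Matrix.vecMulVec_apply, Prod.ext_iff, div_mul_div_comm,
      htwoAux, Complex.ext_iff] <;> field_simp

lemma bell1Aux : Matrix.vecMulVec (bellVec 1) (star (bellVec 1)) = cMAux 0 0 (1/2) (1/2) := by
  ext p q
  fin_cases p <;> fin_cases q <;>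
    simp [bellVec, cMAux, entAux, Matrix.vecMulVec_apply, Prod.ext_iff, div_mul_div_comm,
      htwoAux, Complex.ext_iff] <;> field_simp

lemma bell2Aux : Matrix.vecMulVec (bellVec 2) (star (bellVec 2)) = cMAux 0 0 (1/2) (-(1/2)) := by
  ext p q
  fin_cases p <;> fin_cases q <;>
    simp [bellVec, cMAux, entAux, Matrix.vecMulVec_apply, Prod.ext_iff, div_mul_div_comm,
      htwoAux, Complex.ext_iff] <;> field_simp

lemma bell3Aux : Matrix.vecMulVec (bellVec 3) (star (bellVec 3)) = cMAux (1/2) (-(1/2)) 0 0 := by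
  ext p q
  fin_cases p <;> fin_cases q <;>
    simp [bellVec, cMAux, entAux, Matrix.vecMulVec_apply, Prod.ext_iff, div_mul_div_comm,
      htwoAux, Complex.ext_iff] <;> field_simp

lemma bellDiagonal_eq_cMAux (lam : Fin 4 → ℝ) :
    bellDiagonal lam = cMAux ((lam 0 + lam 3)/2) ((lam 0 - lam 3)/2)
      ((lam 1 + lam 2)/2) ((lam 1 - lam 2)/2) := by
  rw [bellDiagonal, Fin.sum_univ_four, bell0Aux, bell1Aux, bell2Aux, bell3Aux,
    cMAux_smul, cMAux_smul, cMAux_smul, cMAux_smul, cMAux_add, cMAux_add, cMAux_add]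
  congr 1 <;> ring

lemma realign_cMAux (a b c d : ℝ) : realign (cMAux a b c d) = cMAux a c b d := by
  ext p q
  fin_cases p <;> fin_cases q <;>
    simp [realign, cMAux, entAux, Prod.ext_iff]

lemma traceNorm_cMAux (a b c d : ℝ) (hab : a + b = 1) :
    traceNorm (cMAux (a/2) (b/2) (c/2) (d/2))
      = 1/2 + |a-b|/2 + |c+d|/2 + |c-d|/2 := by
  have hS : (cMAux (1/4 + |a-b|/4) (1/4 - |a-b|/4)
      (|c+d|/4 + |c-d|/4) (|c+d|/4 - |c-d|/4)).PosSemidef :=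
    cMAux_posSemidef (1/4) (|a-b|/4) (|c+d|/4) (|c-d|/4) (by norm_num)
      (by positivity) (by positivity) (by positivity)
  have hsq : (cMAux (1/4 + |a-b|/4) (1/4 - |a-b|/4)
      (|c+d|/4 + |c-d|/4) (|c+d|/4 - |c-d|/4)) ^ 2
      = (cMAux (a/2) (b/2) (c/2) (d/2))ᴴ * (cMAux (a/2) (b/2) (c/2) (d/2)) := by
    rw [pow_two, cMAux_mul, cMAux_conjTranspose, cMAux_mul]
    have h1 : (1/4 + |a-b|/4)*(1/4 + |a-b|/4) + (1/4 - |a-b|/4)*(1/4 - |a-b|/4)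
        = a/2*(a/2) + b/2*(b/2) := by
      linear_combination (1/8)*sq_abs (a-b) - ((1+a+b)/8)*hab
    have h2 : (1/4 + |a-b|/4)*(1/4 - |a-b|/4) + (1/4 - |a-b|/4)*(1/4 + |a-b|/4)
        = a/2*(b/2) + b/2*(a/2) := by
      linear_combination -(1/8)*sq_abs (a-b) - ((1+a+b)/8)*hab
    have h3 : (|c+d|/4 + |c-d|/4)*(|c+d|/4 + |c-d|/4)
          + (|c+d|/4 - |c-d|/4)*(|c+d|/4 - |c-d|/4)
        = c/2*(c/2) + d/2*(d/2) := by
      linear_combination (1/8)*sq_abs (c+d) + (1/8)*sq_abs (c-d)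
    have h4 : (|c+d|/4 + |c-d|/4)*(|c+d|/4 - |c-d|/4)
          + (|c+d|/4 - |c-d|/4)*(|c+d|/4 + |c-d|/4)
        = c/2*(d/2) + d/2*(c/2) := by
      linear_combination (1/8)*sq_abs (c+d) - (1/8)*sq_abs (c-d)
    rw [h1, h2, h3, h4]
  have hH := (Matrix.posSemidef_conjTranspose_mul_self (cMAux (a/2) (b/2) (c/2) (d/2))).1
  have hsqrt : hH.cfc Real.sqrt = cMAux (1/4 + |a-b|/4) (1/4 - |a-b|/4)
      (|c+d|/4 + |c-d|/4) (|c+d|/4 - |c-d|/4) := by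
    rw [← hH.cfc_eq, ← hsq, ← cfc_comp_pow (f := Real.sqrt) (n := 2) (ha := hS.1.isSelfAdjoint)]
    conv_rhs => rw [← cfc_id' ℝ _ hS.1.isSelfAdjoint]
    rw [hS.1.cfc_eq, hS.1.cfc_eq]
    unfold Matrix.IsHermitian.cfc
    congr 2
    funext i
    exact congrArg _ (Real.sqrt_sq (hS.eigenvalues_nonneg i))
  have hT : traceNorm (cMAux (a/2) (b/2) (c/2) (d/2)) = (hH.cfc Real.sqrt).trace.re := rfl
  rw [hT, hsqrt, cMAux_trace, Complex.ofReal_re]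
  ring

lemma abs_add_abs_subAux (c d : ℝ) : |c+d| + |c-d| = |c| + |d| + |(|c| - |d|)| := by
  rcases abs_cases c with ⟨h1, _⟩ | ⟨h1, _⟩ <;>
  rcases abs_cases d with ⟨h2, _⟩ | ⟨h2, _⟩ <;>
  rcases abs_cases (|c| - |d|) with ⟨h3, _⟩ | ⟨h3, _⟩ <;>
  rcases abs_cases (c+d) with ⟨h4, h4'⟩ | ⟨h4, h4'⟩ <;>
  rcases abs_cases (c-d) with ⟨h5, h5'⟩ | ⟨h5, h5'⟩ <;>
  linarith

/-- Trace norm of the realignment of a Bell diagonal state, and the realignment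
criterion is exact for Bell diagonal states. -/
theorem tauRealign_bellDiagonal (lam : Fin 4 → ℝ) (hlam : ∀ i, 0 ≤ lam i)
    (hsum : ∑ i, lam i = 1) :
    tauRealign (bellDiagonal lam) =
      (1 / 2) * (1 + |lam 0 + lam 3 - lam 1 - lam 2| + |lam 1 - lam 2| + |lam 0 - lam 3|
        + abs (|lam 0 - lam 3| - |lam 1 - lam 2|)) ∧
    (tauRealign (bellDiagonal lam) ≤ 1 ↔ (⨆ i, lam i) ≤ 1 / 2) := by
  have hab : (lam 0 + lam 3) + (lam 1 + lam 2) = 1 := by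
    rw [Fin.sum_univ_four] at hsum; linarith
  have htau : tauRealign (bellDiagonal lam)
      = 1/2 + |lam 0 + lam 3 - (lam 1 + lam 2)|/2
        + |lam 0 - lam 3 + (lam 1 - lam 2)|/2 + |lam 0 - lam 3 - (lam 1 - lam 2)|/2 := by
    rw [tauRealign, bellDiagonal_eq_cMAux, realign_cMAux]
    exact traceNorm_cMAux _ _ _ _ hab
  have e1 : lam 0 + lam 3 - (lam 1 + lam 2) = lam 0 + lam 3 - lam 1 - lam 2 := by ring
  rw [e1] at htau
  have habs := abs_add_abs_subAux (lam 0 - lam 3) (lam 1 - lam 2)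
  have hiSup : (⨆ i, lam i) ≤ 1/2 ↔ ∀ i, lam i ≤ 1/2 :=
    ciSup_le_iff ((Set.finite_range lam).bddAbove)
  refine ⟨by rw [htau]; linarith, ?_⟩
  rw [htau, hiSup]
  constructor
  · intro h i
    have hints := And.intro (le_abs_self (lam 0 + lam 3 - lam 1 - lam 2))
      (And.intro (neg_abs_le (lam 0 + lam 3 - lam 1 - lam 2))
      (And.intro (le_abs_self (lam 0 - lam 3 + (lam 1 - lam 2)))
      (And.intro (neg_abs_le (lam 0 - lam 3 + (lam 1 - lam 2)))
      (And.intro (le_abs_self (lam 0 - lam 3 - (lam 1 - lam 2)))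
      (neg_abs_le (lam 0 - lam 3 - (lam 1 - lam 2)))))))
    obtain ⟨u1, u2, u3, u4, u5, u6⟩ := hints
    have H0 : lam 0 ≤ 1/2 := by linarith
    have H1 : lam 1 ≤ 1/2 := by linarith
    have H2 : lam 2 ≤ 1/2 := by linarith
    have H3 : lam 3 ≤ 1/2 := by linarith
    fin_cases i
    exacts [H0, H1, H2, H3]
  · intro h
    rcases abs_cases (lam 0 + lam 3 - lam 1 - lam 2) with ⟨e, _⟩ | ⟨e, _⟩ <;>
    rcases abs_cases (lam 0 - lam 3 + (lam 1 - lam 2)) with ⟨f, _⟩ | ⟨f, _⟩ <;>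
    rcases abs_cases (lam 0 - lam 3 - (lam 1 - lam 2)) with ⟨g, _⟩ | ⟨g, _⟩ <;>
    rw [e, f, g] <;>
    linarith [hlam 0, hlam 1, hlam 2, hlam 3, h 0, h 1, h 2, h 3]
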